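/- arXiv:2002.06662 — 2 statements merged into one kernel-verified Lean document; each statement's English description precedes it below -/
import Mathlib

section
/- If K_{jk} < K_{ij}/K_{ik} and K_{ij}/K_{ik} < 1/K_{jk} with all three values in (0,1), then the unique NNK weights θ_j = (K_{ij} - K_{jk}K_{ik})/(1 - K_{jk}^2) and θ_k = (K_{ik} - K_{jk}K_{ij})/(1 - K_{jk}^2) are both strictly positive. -/
theorem stmt_9 (Kij Kik Kjk : ℝ)
    (hij : Kij ∈ Set.Ioo (0 : ℝ) 1) (hik : Kik ∈ Set.Ioo (0 : ℝ) 1)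
    (hjk : Kjk ∈ Set.Ioo (0 : ℝ) 1)
    (h1 : Kjk < Kij / Kik) (h2 : Kij / Kik < 1 / Kjk) :
    0 < (Kij - Kjk * Kik) / (1 - Kjk ^ 2) ∧
      0 < (Kik - Kjk * Kij) / (1 - Kjk ^ 2) := by
  obtain ⟨hij0, hij1⟩ := hij
  obtain ⟨hik0, hik1⟩ := hik
  obtain ⟨hjk0, hjk1⟩ := hjk
  have hden : 0 < 1 - Kjk ^ 2 := by nlinarith
  have h1' : Kjk * Kik < Kij := by
    rw [lt_div_iff₀ hik0] at h1; linarith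
  have h2' : Kij * Kjk < Kik := by
    rw [div_lt_div_iff₀ hik0 hjk0] at h2; linarith
  constructor <;> apply div_pos <;> nlinarith
end

section
/- Conversely, if K_{ij}/K_{ik} ≥ 1/K_{jk} with all kernel values in (0,1), then θ_k = (K_{ik} - K_{jk}K_{ij})/(1 - K_{jk}^2) ≤ 0, i.e., the edge from i to k is pruned by the nonnegativity constraint. -/
theorem stmt_10 (Kij Kik Kjk : ℝ)
    (hij : Kij ∈ Set.Ioo (0 : ℝ) 1) (hik : Kik ∈ Set.Ioo (0 : ℝ) 1)
    (hjk : Kjk ∈ Set.Ioo (0 : ℝ) 1)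
    (h : Kij / Kik ≥ 1 / Kjk) :
    (Kik - Kjk * Kij) / (1 - Kjk ^ 2) ≤ 0 := by
  obtain ⟨h1, h2⟩ := hij
  obtain ⟨h3, h4⟩ := hik
  obtain ⟨h5, h6⟩ := hjk
  have hden : 0 < 1 - Kjk ^ 2 := by nlinarith
  have hnum : Kik - Kjk * Kij ≤ 0 := by
    rw [ge_iff_le, div_le_div_iff₀ h5 h3] at h
    nlinarith
  exact div_nonpos_of_nonpos_of_nonneg hnum hden.le
end
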